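/- Let a be an anti-symmetric separately radial function on 𝔹^n and σ ∈ S_n an odd permutation. Then for every multi-index m ∈ ℤ_+^n, the Toeplitz eigenvalues satisfy γ_a(σ(m)) = -γ_a(m), where γ_a(m) = ⟨T_a e_m, e_m⟩ in H^2_α(𝔹^n). -/

import Mathlib

/-! Permuting the coordinates by `σ` preserves `v_α`, carries `e_{σ(m)}` to `e_m`, and multiplies
the anti-symmetric symbol by `sign σ = -1`; the change of variables `z ↦ z ∘ σ` in the integral
defining `γ_a(σ(m))` therefore turns it into `-γ_a(m)`. -/

noncomputable section
open MeasureTheory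

/-- The open unit ball in `ℂⁿ`. -/
def cball (n : ℕ) : Set (Fin n → ℂ) := {z | ∑ i, ‖z i‖ ^ 2 < 1}

/-- Normalized Lebesgue measure `dv` on `ℂⁿ`, so that the unit ball has measure 1. -/
def dv (n : ℕ) : Measure (Fin n → ℂ) :=
  (ENNReal.ofReal ((n.factorial : ℝ) / Real.pi ^ n)) • volume

/-- The normalizing constant `c_α`. -/
def cA (n : ℕ) (α : ℝ) : ℝ :=
  Real.Gamma (n + α + 1) / ((n.factorial : ℝ) * Real.Gamma (α + 1))

/-- The weighted measure `v_α = c_α (1-|z|²)^α dv(z)` on the unit ball. -/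
def vA (n : ℕ) (α : ℝ) : Measure (Fin n → ℂ) :=
  ((dv n).restrict (cball n)).withDensity
    (fun z => ENNReal.ofReal (cA n α * (1 - ∑ i, ‖z i‖ ^ 2) ^ α))

/-- The monomial `z^m`. -/
def mon (n : ℕ) (m : Fin n → ℕ) : (Fin n → ℂ) → ℂ := fun z => ∏ i, z i ^ m i

/-- The normalized monomial `e_m`. -/
def eMon (n : ℕ) (α : ℝ) (m : Fin n → ℕ) : (Fin n → ℂ) → ℂ := fun z =>
  (Real.sqrt (Real.Gamma (n + (∑ i, m i) + α + 1) /
      ((∏ i, (m i).factorial : ℕ) * Real.Gamma (n + α + 1))) : ℝ) * ∏ i, z i ^ m i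

theorem MeasureTheory.MeasurePreserving.withDensity_comp {α β : Type*} [MeasurableSpace α]
    [MeasurableSpace β] {μ : Measure α} {ν : Measure β} {T : α → β}
    (hT : MeasurePreserving T μ ν) {f : β → ENNReal} (hf : Measurable f) :
    MeasurePreserving T (μ.withDensity (f ∘ T)) (ν.withDensity f) := by
  refine ⟨hT.measurable, Measure.ext fun s hs => ?_⟩
  rw [Measure.map_apply hT.measurable hs, withDensity_apply _ (hT.measurable hs),
    withDensity_apply _ hs]
  exact hT.setLIntegral_comp_preimage hs hf

theorem measurableSet_cball (n : ℕ) : MeasurableSet (cball n) :=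
  measurableSet_lt (by fun_prop) measurable_const

section PermCoords

variable {n : ℕ} (σ : Equiv.Perm (Fin n))

def permCoords : (Fin n → ℂ) ≃ᵐ (Fin n → ℂ) :=
  MeasurableEquiv.piCongrLeft (fun _ => ℂ) σ.symm

theorem permCoords_apply (z : Fin n → ℂ) : permCoords σ z = fun i => z (σ i) := by
  ext i
  simpa [permCoords, MeasurableEquiv.coe_piCongrLeft] using
    Equiv.piCongrLeft_apply_apply (fun _ : Fin n => ℂ) σ.symm z (σ i)

theorem sum_norm_sq_permCoords (z : Fin n → ℂ) :
    ∑ i, ‖permCoords σ z i‖ ^ 2 = ∑ i, ‖z i‖ ^ 2 := by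
  rw [permCoords_apply]
  exact Equiv.sum_comp σ fun i => ‖z i‖ ^ 2

theorem preimage_permCoords_cball : permCoords σ ⁻¹' cball n = cball n := by
  ext z
  simp only [Set.mem_preimage, cball, Set.mem_ofPred_eq, sum_norm_sq_permCoords]

theorem measurePreserving_permCoords_dv :
    MeasurePreserving (permCoords σ) (dv n) (dv n) := by
  have hvol : MeasurePreserving (permCoords σ) volume volume :=
    volume_measurePreserving_piCongrLeft (fun _ : Fin n => ℂ) σ.symm
  exact ⟨hvol.measurable, by rw [dv, Measure.map_smul, hvol.map_eq]⟩

theorem measurePreserving_permCoords_vA (α : ℝ) :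
    MeasurePreserving (permCoords σ) (vA n α) (vA n α) := by
  have hball := preimage_permCoords_cball σ ▸
    (measurePreserving_permCoords_dv σ).restrict_preimage (measurableSet_cball n)
  have hdens := hball.withDensity_comp
    (f := fun z => ENNReal.ofReal (cA n α * (1 - ∑ i, ‖z i‖ ^ 2) ^ α)) (by fun_prop)
  simpa only [vA, Function.comp_def, sum_norm_sq_permCoords] using hdens

end PermCoords

theorem eMon_comp_perm (n : ℕ) (α : ℝ) (σ : Equiv.Perm (Fin n)) (m : Fin n → ℕ)
    (z : Fin n → ℂ) : eMon n α (fun i => m (σ i)) (fun i => z (σ i)) = eMon n α m z := by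
  have hsum : ∑ i, m (σ i) = ∑ i, m i := Equiv.sum_comp σ m
  have hfact : ∏ i, (m (σ i)).factorial = ∏ i, (m i).factorial :=
    Equiv.prod_comp σ fun i => (m i).factorial
  have hmon : ∏ i, z (σ i) ^ m (σ i) = ∏ i, z i ^ m i := Equiv.prod_comp σ fun i => z i ^ m i
  simp only [eMon, hsum, hfact, hmon]

theorem toeplitz_antisymm_eigenvalue_odd_perm_general (n : ℕ) (α : ℝ)
    (a : (Fin n → ℂ) → ℂ)
    (hanti : ∀ (τ : Equiv.Perm (Fin n)) (z : Fin n → ℂ),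
      a (fun i => z (τ i)) = ((Equiv.Perm.sign τ : ℤ) : ℂ) * a z)
    (σ : Equiv.Perm (Fin n)) (hσ : Equiv.Perm.sign σ = -1) (m : Fin n → ℕ) :
    ∫ z, a z * eMon n α (fun i => m (σ i)) z *
        (starRingEnd ℂ) (eMon n α (fun i => m (σ i)) z) ∂(vA n α) =
      -∫ z, a z * eMon n α m z * (starRingEnd ℂ) (eMon n α m z) ∂(vA n α) := by
  have ha : ∀ z, a (permCoords σ z) = -a z := fun z => by
    rw [permCoords_apply, hanti σ z, hσ]
    norm_num
  have he : ∀ z, eMon n α (fun i => m (σ i)) (permCoords σ z) = eMon n α m z := fun z => by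
    rw [permCoords_apply, eMon_comp_perm]
  rw [← (measurePreserving_permCoords_vA σ α).integral_comp', ← integral_neg]
  congr 1 with z
  simp only [ha, he, neg_mul]

/-- For an anti-symmetric separately radial bounded symbol `a` and an odd permutation `σ`,
the Toeplitz eigenvalues satisfy `γ_a(σ(m)) = -γ_a(m)`. -/
theorem toeplitz_antisymm_eigenvalue_odd_perm (n : ℕ) (α : ℝ) (hα : -1 < α)
    (a : (Fin n → ℂ) → ℂ) (hmeas : Measurable a) (hbd : ∃ C, ∀ z, ‖a z‖ ≤ C)
    (hrad : ∀ z w : Fin n → ℂ, (∀ i, ‖z i‖ = ‖w i‖) → a z = a w)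
    (hanti : ∀ (τ : Equiv.Perm (Fin n)) (z : Fin n → ℂ),
      a (fun i => z (τ i)) = ((Equiv.Perm.sign τ : ℤ) : ℂ) * a z)
    (σ : Equiv.Perm (Fin n)) (hσ : Equiv.Perm.sign σ = -1) (m : Fin n → ℕ) :
    ∫ z, a z * eMon n α (fun i => m (σ i)) z *
        (starRingEnd ℂ) (eMon n α (fun i => m (σ i)) z) ∂(vA n α) =
      -∫ z, a z * eMon n α m z * (starRingEnd ℂ) (eMon n α m z) ∂(vA n α) :=
  toeplitz_antisymm_eigenvalue_odd_perm_general n α a hanti σ hσ m
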